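/- arXiv:2205.13283 — 4 statements merged into one kernel-verified Lean document; each statement's English description precedes it below -/
import Mathlib

section
/- Existence of one-layer lifting: Given training data S, any fully-connected network NN with widths {m_l}_{l=0}^L, and any network NN′ that is one-layer deeper than NN at position q (inserted layer q̂ of width m′_{q̂} ≥ min{m_q, m_{q+1}}), the one-layer lifting T_S is nonempty-valued: for every parameter θ of NN, the set T_S(θ) of lifted parameters of NN′ is nonempty. -/
/-!
Common formalization of fully-connected neural networks, one-layer deeper
networks, and the critical lifting operator from
"Embedding Principle in Depth for the Loss Landscape Analysis of Deep Neural Networks".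

Vectors are modelled as functions `ℕ → ℝ` (coordinates beyond the layer width
are irrelevant and feature vectors are zero-padded there); parameters assign to
each layer index `l ≥ 1` a weight "matrix" `ℕ → ℕ → ℝ` and a bias `ℕ → ℝ`.
-/

/-- Parameters of a network: for each layer `l ≥ 1` a weight matrix and a bias. -/
abbrev NNParams : Type := ℕ → (ℕ → ℕ → ℝ) × (ℕ → ℝ)

/-- Feature vectors `f^[l]_θ(x)`: `f^[0]_θ(x) = x` (truncated to the input width),
`f^[l]_θ(x) = σ(W^[l] f^[l-1]_θ(x) + b^[l])` for `1 ≤ l ≤ L-1`, and no activation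
at the output layer `L`.  Coordinates outside the layer width are `0`. -/
noncomputable def feat (σ : ℝ → ℝ) (m : ℕ → ℕ) (L : ℕ) (θ : NNParams) (x : ℕ → ℝ) :
    ℕ → ℕ → ℝ
  | 0 => fun i => if i < m 0 then x i else 0
  | l + 1 => fun i =>
      if i < m (l + 1) then
        (if l + 1 = L then id else σ)
          ((∑ j ∈ Finset.range (m l), (θ (l + 1)).1 i j * feat σ m L θ x l j)
            + (θ (l + 1)).2 i)
      else 0

/-- Output `f_θ(x) = W^[L] f^[L-1]_θ(x) + b^[L]` of the network. -/
noncomputable def nnOut (σ : ℝ → ℝ) (m : ℕ → ℕ) (L : ℕ) (θ : NNParams) (x : ℕ → ℝ) :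
    ℕ → ℝ :=
  feat σ m L θ x L

/-- Pre-activation of layer `l ≥ 1`: `W^[l] f^[l-1]_θ(x) + b^[l]`. -/
noncomputable def preAct (σ : ℝ → ℝ) (m : ℕ → ℕ) (L : ℕ) (θ : NNParams) (x : ℕ → ℝ)
    (l i : ℕ) : ℝ :=
  (∑ j ∈ Finset.range (m (l - 1)), (θ l).1 i j * feat σ m L θ x (l - 1) j) + (θ l).2 i

/-- `(a,b)` is an affine subdomain of `σ` with slope `lam ≠ 0` and intercept `mu`. -/
def AffineSubdomain (σ : ℝ → ℝ) (a b lam mu : ℝ) : Prop :=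
  a < b ∧ lam ≠ 0 ∧ ∀ t ∈ Set.Ioo a b, σ t = lam * t + mu

/-- Widths of the one-layer deeper network obtained by inserting a hidden layer of
width `mh` between layers `q` and `q+1` (the inserted layer gets index `q+1` and
all later layers are shifted up by one). -/
def insertWidth (m : ℕ → ℕ) (q mh : ℕ) : ℕ → ℕ :=
  fun l => if l ≤ q then m l else if l = q + 1 then mh else m (l - 1)

/-- Local-in-layer condition: all layers of the deeper network other than the inserted
layer (deep index `q+1`) and the following layer (deep index `q+2`) are inherited
from the shallow network. -/
def LocalInLayer (m : ℕ → ℕ) (L q : ℕ) (θ θ' : NNParams) : Prop :=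
  (∀ l, 1 ≤ l → l ≤ q →
    (∀ i < m l, ∀ j < m (l - 1), (θ' l).1 i j = (θ l).1 i j) ∧
    (∀ i < m l, (θ' l).2 i = (θ l).2 i)) ∧
  (∀ l, q + 3 ≤ l → l ≤ L + 1 →
    (∀ i < m (l - 1), ∀ j < m (l - 2), (θ' l).1 i j = (θ (l - 1)).1 i j) ∧
    (∀ i < m (l - 1), (θ' l).2 i = (θ (l - 1)).2 i))

/-- Output preserving condition:
`W'^[q+1] diag(λ) W'^[q̂] = W^[q+1]` and
`W'^[q+1] diag(λ) b'^[q̂] + W'^[q+1] μ + b'^[q+1] = b^[q+1]`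
(in deep indexing, `W'^[q̂] = (θ' (q+1)).1` and `W'^[q+1] = (θ' (q+2)).1`). -/
def OutputPres (m : ℕ → ℕ) (q mh : ℕ) (θ θ' : NNParams) (lam mu : ℕ → ℝ) : Prop :=
  (∀ i < m (q + 1), ∀ k < m q,
    (∑ j ∈ Finset.range mh, (θ' (q + 2)).1 i j * (lam j * (θ' (q + 1)).1 j k))
      = (θ (q + 1)).1 i k) ∧
  (∀ i < m (q + 1),
    (∑ j ∈ Finset.range mh, (θ' (q + 2)).1 i j * (lam j * (θ' (q + 1)).2 j + mu j))
      + (θ' (q + 2)).2 i = (θ (q + 1)).2 i)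

/-- `θ'` is a one-layer lifting of `θ` with explicit slope/intercept vectors
`lam, mu` and affine subdomains `(aa j, bb j)`: the local-in-layer, layer
linearization and output preserving conditions. -/
def LiftWitness (σ : ℝ → ℝ) (m : ℕ → ℕ) (L q mh : ℕ) {n : ℕ}
    (S : Fin n → (ℕ → ℝ) × (ℕ → ℝ)) (θ θ' : NNParams) (lam mu aa bb : ℕ → ℝ) : Prop :=
  LocalInLayer m L q θ θ' ∧
  (∀ j < mh, AffineSubdomain σ (aa j) (bb j) (lam j) (mu j) ∧
    ∀ i : Fin n,
      preAct σ (insertWidth m q mh) (L + 1) θ' (S i).1 (q + 1) j ∈ Set.Ioo (aa j) (bb j)) ∧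
  OutputPres m q mh θ θ' lam mu

/-- The one-layer lifting operator `T_S(θ)`: the set of all parameters of the
one-layer deeper network satisfying the local-in-layer, layer linearization and
output preserving conditions. -/
def liftSet (σ : ℝ → ℝ) (m : ℕ → ℕ) (L q mh : ℕ) {n : ℕ}
    (S : Fin n → (ℕ → ℝ) × (ℕ → ℝ)) (θ : NNParams) : Set NNParams :=
  { θ' | ∃ lam mu aa bb : ℕ → ℝ, LiftWitness σ m L q mh S θ θ' lam mu aa bb }

/-- Empirical risk `R_S(θ) = (1/n) ∑ᵢ ℓ(f_θ(xᵢ), yᵢ)`. -/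
noncomputable def empRisk (σ : ℝ → ℝ) (ℓ : (ℕ → ℝ) → (ℕ → ℝ) → ℝ) (m : ℕ → ℕ) (L : ℕ)
    {n : ℕ} (S : Fin n → (ℕ → ℝ) × (ℕ → ℝ)) (θ : NNParams) : ℝ :=
  (1 / (n : ℝ)) * ∑ i : Fin n, ℓ (nnOut σ m L θ (S i).1) (S i).2

/-- Update a single weight entry `W^[l]_{ij}` of the parameters. -/
def updW (θ : NNParams) (l i j : ℕ) (t : ℝ) : NNParams :=
  fun l' => if l' = l then
    ((fun i' j' => if i' = i ∧ j' = j then t else (θ l).1 i' j'), (θ l).2)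
  else θ l'

/-- Update a single bias entry `b^[l]_i` of the parameters. -/
def updB (θ : NNParams) (l i : ℕ) (t : ℝ) : NNParams :=
  fun l' => if l' = l then
    ((θ l).1, fun i' => if i' = i then t else (θ l).2 i')
  else θ l'

/-- `θ` is a critical point of the empirical risk: all partial derivatives with
respect to the weight and bias entries of all layers vanish. -/
def IsCriticalPt (σ : ℝ → ℝ) (ℓ : (ℕ → ℝ) → (ℕ → ℝ) → ℝ) (m : ℕ → ℕ) (L : ℕ)
    {n : ℕ} (S : Fin n → (ℕ → ℝ) × (ℕ → ℝ)) (θ : NNParams) : Prop :=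
  ∀ l, 1 ≤ l → l ≤ L →
    (∀ i < m l, ∀ j < m (l - 1),
      deriv (fun t => empRisk σ ℓ m L S (updW θ l i j t)) ((θ l).1 i j) = 0) ∧
    (∀ i < m l,
      deriv (fun t => empRisk σ ℓ m L S (updB θ l i t)) ((θ l).2 i) = 0)

/-- Feature gradients `g^[l]_θ(x)`: `g^[L] = 1` and `g^[l] = σ'(W^[l] f^[l-1] + b^[l])`
for `l ≤ L-1`; coordinates outside the layer width are `0`. -/
noncomputable def featGrad (σ : ℝ → ℝ) (m : ℕ → ℕ) (L : ℕ) (θ : NNParams) (x : ℕ → ℝ)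
    (l i : ℕ) : ℝ :=
  if i < m l then (if l = L then 1 else deriv σ (preAct σ m L θ x l i)) else 0

/-- Auxiliary downward recursion for error vectors: `errVecAux … k = z^[L-k]`. -/
noncomputable def errVecAux (σ : ℝ → ℝ) (ℓ : (ℕ → ℝ) → (ℕ → ℝ) → ℝ) (m : ℕ → ℕ) (L : ℕ)
    (θ : NNParams) (x y : ℕ → ℝ) : ℕ → ℕ → ℝ
  | 0 => fun i =>
      if i < m L then
        deriv (fun t => ℓ (Function.update (nnOut σ m L θ x) i t) y) (nnOut σ m L θ x i)
      else 0
  | k + 1 => fun i =>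
      if i < m (L - (k + 1)) then
        ∑ p ∈ Finset.range (m (L - k)),
          (θ (L - k)).1 p i * (errVecAux σ ℓ m L θ x y k p * featGrad σ m L θ x (L - k) p)
      else 0

/-- Error vectors `z^[l]_θ(x)`: `z^[L] = ∇_f ℓ(f_θ(x), y)` and
`z^[l] = (W^[l+1])ᵀ (z^[l+1] ∘ g^[l+1])`. -/
noncomputable def errVec (σ : ℝ → ℝ) (ℓ : (ℕ → ℝ) → (ℕ → ℝ) → ℝ) (m : ℕ → ℕ) (L : ℕ)
    (θ : NNParams) (x y : ℕ → ℝ) (l : ℕ) : ℕ → ℝ :=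
  errVecAux σ ℓ m L θ x y (L - l)

/-- A list of insertion positions/widths `(q, mh)` describes a valid chain of
one-layer-deeper insertions starting from widths `m` and depth `L`. -/
def ValidChain (m : ℕ → ℕ) (L : ℕ) : List (ℕ × ℕ) → Prop
  | [] => True
  | (q, mh) :: rest =>
      1 ≤ q ∧ q + 1 ≤ L ∧ min (m q) (m (q + 1)) ≤ mh ∧
        ValidChain (insertWidth m q mh) (L + 1) rest

/-- The widths obtained after performing a chain of insertions. -/
def chainWidths (m : ℕ → ℕ) : List (ℕ × ℕ) → (ℕ → ℕ)
  | [] => m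
  | (q, mh) :: rest => chainWidths (insertWidth m q mh) rest

/-- Multi-layer lifting: the composition of the one-layer liftings along a chain of
insertions. -/
def liftChain (σ : ℝ → ℝ) {n : ℕ} (S : Fin n → (ℕ → ℝ) × (ℕ → ℝ)) :
    (ℕ → ℕ) → ℕ → List (ℕ × ℕ) → NNParams → Set NNParams
  | _, _, [], θ => {θ}
  | m, L, (q, mh) :: rest, θ =>
      {θ'' | ∃ θ', θ' ∈ liftSet σ m L q mh S θ ∧
        θ'' ∈ liftChain σ S (insertWidth m q mh) (L + 1) rest θ'}

/-- `NN'` (widths `m'`, depth `L + J`) is `J`-layer deeper than `NN` (widths `m`,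
depth `L`): it is obtained by `J` successive one-layer insertions, each inserted
layer having width at least the minimum of the widths of its neighboring layers. -/
def JDeeper : ℕ → (ℕ → ℕ) → ℕ → (ℕ → ℕ) → Prop
  | 0, m, L, m' => ∀ l ≤ L, m' l = m l
  | J + 1, m, L, m' =>
      ∃ mmid, JDeeper J m L mmid ∧
        ∃ q mh, 1 ≤ q ∧ q + 1 ≤ L + J ∧ min (mmid q) (mmid (q + 1)) ≤ mh ∧
          ∀ l ≤ L + J + 1, m' l = insertWidth mmid q mh l

private lemma feat_congr_aux (σ : ℝ → ℝ) (m : ℕ → ℕ) (L : ℕ) (θ θ' : NNParams)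
    (x : ℕ → ℝ) (q : ℕ) (h : ∀ l, l ≤ q → θ' l = θ l) :
    ∀ l ≤ q, feat σ m L θ' x l = feat σ m L θ x l := by
  intro l
  induction l with
  | zero => intro _; simp [feat]
  | succ l ih =>
    intro hl
    funext i
    simp only [feat]
    rw [h (l + 1) hl, ih (by omega)]

private lemma lift_nonempty_of_factor (σ : ℝ → ℝ) (m : ℕ → ℕ) (L q mh : ℕ)
    (hqL : q + 1 ≤ L) {n : ℕ} (S : Fin n → (ℕ → ℝ) × (ℕ → ℝ)) (θ : NNParams)
    (a b lam mu : ℝ) (hA : AffineSubdomain σ a b lam mu)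
    (A B : ℕ → ℕ → ℝ)
    (hBA : ∀ i < m (q + 1), ∀ k < m q,
      ∑ j ∈ Finset.range mh, B i j * A j k = (θ (q + 1)).1 i k) :
    (liftSet σ m L q mh S θ).Nonempty := by
  obtain ⟨hab, hlam, hσ⟩ := hA
  set m' : ℕ → ℕ := insertWidth m q mh with hm'
  set r : ℝ := (b - a) / 2 with hr
  set c : ℝ := (a + b) / 2 with hc
  have hr0 : 0 < r := by simp [hr]; linarith
  set G : (ℕ → ℝ) → ℕ → ℝ := fun x k => feat σ m' (L + 1) θ x q k with hG
  set v : Fin n → ℕ → ℝ := fun i j => ∑ k ∈ Finset.range (m q), A j k * G (S i).1 k with hv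
  set Mx : ℝ := ∑ i : Fin n, ∑ j ∈ Finset.range mh, |v i j| with hMx
  have hM0 : 0 ≤ Mx := by
    apply Finset.sum_nonneg
    intro i _
    exact Finset.sum_nonneg fun j _ => abs_nonneg _
  have hMb : ∀ (i : Fin n), ∀ j < mh, |v i j| ≤ Mx := by
    intro i j hj
    calc |v i j| ≤ ∑ j' ∈ Finset.range mh, |v i j'| :=
          Finset.single_le_sum (f := fun j' => |v i j'|)
            (fun j' _ => abs_nonneg _) (Finset.mem_range.mpr hj)
      _ ≤ Mx := Finset.single_le_sum
          (f := fun i' => ∑ j' ∈ Finset.range mh, |v i' j'|)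
          (fun i' _ => Finset.sum_nonneg fun j' _ => abs_nonneg _)
          (Finset.mem_univ i)
  set ε : ℝ := r / (Mx + 1) with hε
  have hε0 : 0 < ε := by positivity
  set θ' : NNParams := fun l =>
    if l ≤ q then θ l
    else if l = q + 1 then (fun j k => ε * A j k, fun _ => c)
    else if l = q + 2 then
      (fun i j => B i j / (lam * ε),
       fun i => (θ (q + 1)).2 i -
         ∑ j ∈ Finset.range mh, B i j / (lam * ε) * (lam * c + mu))
    else θ (l - 1) with hθ'
  have hlow : ∀ l ≤ q, θ' l = θ l := by
    intro l hl; simp [hθ', hl]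
  have hq1 : θ' (q + 1) = (fun j k => ε * A j k, fun _ => c) := by
    simp [hθ']
  have hq2 : θ' (q + 2) = (fun i j => B i j / (lam * ε),
       fun i => (θ (q + 1)).2 i -
         ∑ j ∈ Finset.range mh, B i j / (lam * ε) * (lam * c + mu)) := by
    simp [hθ']
  have hfeat : ∀ x, feat σ m' (L + 1) θ' x q = feat σ m' (L + 1) θ x q := by
    intro x
    exact feat_congr_aux σ m' (L + 1) θ θ' x q hlow q le_rfl
  have hmq : m' q = m q := by simp [hm', insertWidth]
  have hpre : ∀ (i : Fin n) (j : ℕ),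
      preAct σ m' (L + 1) θ' (S i).1 (q + 1) j = ε * v i j + c := by
    intro i j
    unfold preAct
    simp only [Nat.add_sub_cancel, hq1, hfeat, hmq]
    rw [hv]
    simp only [Finset.mul_sum]
    congr 1
    apply Finset.sum_congr rfl
    intro k _
    ring
  refine ⟨θ', fun _ => lam, fun _ => mu, fun _ => a, fun _ => b, ?_, ?_, ?_⟩
  · constructor
    · intro l h1 hl
      rw [hlow l hl]
      exact ⟨fun _ _ _ _ => rfl, fun _ _ => rfl⟩
    · intro l h3 hL
      have : θ' l = θ (l - 1) := by
        have h1 : ¬ l ≤ q := by omega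
        have h2 : l ≠ q + 1 := by omega
        have h4 : l ≠ q + 2 := by omega
        simp [hθ', h1, h2, h4]
      rw [this]
      exact ⟨fun _ _ _ _ => rfl, fun _ _ => rfl⟩
  · intro j hj
    refine ⟨⟨hab, hlam, hσ⟩, ?_⟩
    intro i
    rw [hpre i j]
    have hvb : |v i j| ≤ Mx := hMb i j hj
    have hlt : ε * |v i j| < r := by
      have h1 : ε * |v i j| ≤ ε * Mx := by
        apply mul_le_mul_of_nonneg_left hvb (le_of_lt hε0)
      have h2 : ε * Mx < r := by
        rw [hε]
        rw [div_mul_eq_mul_div, div_lt_iff₀ (by linarith)]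
        nlinarith
      linarith
    constructor
    · have := (abs_lt.mp (by rwa [abs_mul, abs_of_pos hε0] : |ε * v i j| < r)).1
      simp only [hc, hr] at this ⊢
      linarith
    · have := (abs_lt.mp (by rwa [abs_mul, abs_of_pos hε0] : |ε * v i j| < r)).2
      simp only [hc, hr] at this ⊢
      linarith
  · constructor
    · intro i hi k hk
      rw [hq1, hq2]
      have : ∀ j ∈ Finset.range mh,
          B i j / (lam * ε) * (lam * (ε * A j k)) = B i j * A j k := by
        intro j _
        field_simp
      rw [Finset.sum_congr rfl this]
      exact hBA i hi k hk
    · intro i hi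
      rw [hq1, hq2]
      simp only
      ring

/-- **Existence of one-layer lifting.**  Given data `S`, a network with widths `m`
and depth `L`, and a one-layer deeper network (insertion position `q`, inserted
width `mh ≥ min (m q) (m (q+1))`), if `σ` has an affine subdomain then the
one-layer lifting is nonempty-valued: `T_S(θ) ≠ ∅` for every parameter `θ`. -/
theorem existence_of_one_layer_lifting
    (σ : ℝ → ℝ) (m : ℕ → ℕ) (L q mh : ℕ)
    (hq : 1 ≤ q) (hqL : q + 1 ≤ L)
    (hmh : min (m q) (m (q + 1)) ≤ mh)
    (haff : ∃ a b lam mu : ℝ, AffineSubdomain σ a b lam mu)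
    {n : ℕ} (S : Fin n → (ℕ → ℝ) × (ℕ → ℝ)) (θ : NNParams) :
    (liftSet σ m L q mh S θ).Nonempty := by
  obtain ⟨a, b, lam, mu, hA⟩ := haff
  rcases le_total (m q) (m (q + 1)) with h | h
  · have hmq : m q ≤ mh := by omega
    apply lift_nonempty_of_factor σ m L q mh hqL S θ a b lam mu hA
      (fun j k => if j = k then 1 else 0)
      (fun i j => if j < m q then (θ (q + 1)).1 i j else 0)
    intro i hi k hk
    have : ∀ j ∈ Finset.range mh,
        (if j < m q then (θ (q + 1)).1 i j else 0) * (if j = k then (1:ℝ) else 0)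
          = if j = k then (if j < m q then (θ (q + 1)).1 i j else 0) else 0 := by
      intro j _
      by_cases hjk : j = k <;> simp [hjk]
    rw [Finset.sum_congr rfl this, Finset.sum_ite_eq' (Finset.range mh) k]
    simp [Finset.mem_range.mpr (lt_of_lt_of_le hk hmq), hk]
  · have hmq : m (q + 1) ≤ mh := by omega
    apply lift_nonempty_of_factor σ m L q mh hqL S θ a b lam mu hA
      ((θ (q + 1)).1)
      (fun i j => if i = j then 1 else 0)
    intro i hi k hk
    have : ∀ j ∈ Finset.range mh,
        (if i = j then (1:ℝ) else 0) * (θ (q + 1)).1 j k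
          = if j = i then (θ (q + 1)).1 j k else 0 := by
      intro j _
      by_cases hij : i = j <;> simp [hij, eq_comm]
    rw [Finset.sum_congr rfl this, Finset.sum_ite_eq' (Finset.range mh) i]
    simp [Finset.mem_range.mpr (lt_of_lt_of_le hi hmq)]
end

section
/- Output preservation under one-layer lifting: Given data S, a fully-connected NN, a one-layer deeper NN′, and a parameter θ of NN, every lifted parameter θ′ ∈ T_S(θ) satisfies f_{θ′}(x) = f_θ(x) for every training input x ∈ S_x. -/
/-- **Output preservation under one-layer lifting.**  Every lifted parameter
`θ' ∈ T_S(θ)` satisfies `f_{θ'}(x) = f_θ(x)` for every training input `x ∈ S_x`. -/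
theorem output_preservation_one_layer_lifting
    (σ : ℝ → ℝ) (m : ℕ → ℕ) (L q mh : ℕ)
    (hq : 1 ≤ q) (hqL : q + 1 ≤ L)
    (hmh : min (m q) (m (q + 1)) ≤ mh)
    {n : ℕ} (S : Fin n → (ℕ → ℝ) × (ℕ → ℝ)) (θ θ' : NNParams)
    (hθ' : θ' ∈ liftSet σ m L q mh S θ) :
    ∀ i : Fin n,
      nnOut σ (insertWidth m q mh) (L + 1) θ' (S i).1 = nnOut σ m L θ (S i).1 := by
  obtain ⟨lam, mu, aa, bb, hLoc, hLin, hOut⟩ := hθ'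
  intro i
  set x := (S i).1 with hx
  set m' := insertWidth m q mh with hm'
  have hw0 : ∀ l ≤ q, m' l = m l := by
    intro l hl; simp [hm', insertWidth, hl]
  have hw1 : m' (q + 1) = mh := by
    have h1 : ¬ q + 1 ≤ q := by omega
    simp [hm', insertWidth, h1]
  have hw2 : ∀ l, q + 2 ≤ l → m' l = m (l - 1) := by
    intro l hl
    have h1 : ¬ l ≤ q := by omega
    have h2 : l ≠ q + 1 := by omega
    simp [hm', insertWidth, h1, h2]
  -- Claim 1: features agree up to layer q
  have hA : ∀ l ≤ q, feat σ m' (L + 1) θ' x l = feat σ m L θ x l := by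
    intro l
    induction l with
    | zero =>
      intro _
      funext j
      simp [feat, hw0 0 (Nat.zero_le _)]
    | succ l ih =>
      intro hl
      have hlq : l ≤ q := by omega
      have ihl := ih hlq
      funext j
      have hne1 : l + 1 ≠ L + 1 := by omega
      have hne2 : l + 1 ≠ L := by omega
      have h1 := hLoc.1 (l + 1) (by omega) hl
      simp only [feat, hw0 (l + 1) hl, hw0 l hlq, hne1, hne2, if_false, ihl]
      by_cases hj : j < m (l + 1)
      · simp only [hj, if_true]
        congr 1
        have hb := h1.2 j hj
        simp only [Nat.add_sub_cancel] at hb h1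
        rw [hb]
        congr 1
        exact Finset.sum_congr rfl fun k hk =>
          by rw [h1.1 j hj k (Finset.mem_range.mp hk)]
      · simp [hj]
  have hfq : feat σ m' (L + 1) θ' x q = feat σ m L θ x q := hA q le_rfl
  -- linearization of the inserted layer on the data
  have hσ' : ∀ j < mh, feat σ m' (L + 1) θ' x (q + 1) j
      = lam j * ((∑ k ∈ Finset.range (m q),
          (θ' (q + 1)).1 j k * feat σ m L θ x q k) + (θ' (q + 1)).2 j) + mu j := by
    intro j hj
    obtain ⟨⟨hab, hlam, haff⟩, hmem⟩ := hLin j hj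
    have h1 : q + 1 ≠ L + 1 := by omega
    have hpre : preAct σ m' (L + 1) θ' x (q + 1) j
        = (∑ k ∈ Finset.range (m q), (θ' (q + 1)).1 j k * feat σ m L θ x q k)
          + (θ' (q + 1)).2 j := by
      simp only [preAct, Nat.add_sub_cancel, hw0 q le_rfl, hfq]
    have hmemx := hmem i
    rw [← hx] at hmemx
    have := haff _ hmemx
    rw [hpre] at this
    simp only [feat, hw1, hj, if_true, h1, if_false]
    rw [show (∑ k ∈ Finset.range (m' q), (θ' (q + 1)).1 j k * feat σ m' (L + 1) θ' x q k)
          + (θ' (q + 1)).2 j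
        = (∑ k ∈ Finset.range (m q), (θ' (q + 1)).1 j k * feat σ m L θ x q k)
          + (θ' (q + 1)).2 j by rw [hw0 q le_rfl, hfq]]
    exact this
  -- one-step unfolding of `feat`
  have featEq : ∀ (mm : ℕ → ℕ) (LL : ℕ) (θθ : NNParams) (l i0 : ℕ),
      feat σ mm LL θθ x (l + 1) i0
        = if i0 < mm (l + 1) then
            (if l + 1 = LL then id else σ)
              ((∑ j ∈ Finset.range (mm l), (θθ (l + 1)).1 i0 j * feat σ mm LL θθ x l j)
                + (θθ (l + 1)).2 i0)
          else 0 := fun _ _ _ _ _ => rfl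
  -- Claim 2: deep layer q+2 reproduces shallow layer q+1
  have hB : feat σ m' (L + 1) θ' x (q + 2) = feat σ m L θ x (q + 1) := by
    funext i0
    have hwq2 : m' (q + 2) = m (q + 1) := by
      have := hw2 (q + 2) le_rfl; simpa using this
    rw [show q + 2 = q + 1 + 1 from rfl, featEq m' (L + 1) θ', featEq m L θ, hwq2, hw1]
    by_cases hi : i0 < m (q + 1)
    · simp only [hi, if_true]
      have hsum : (∑ j ∈ Finset.range mh,
            (θ' (q + 2)).1 i0 j * feat σ m' (L + 1) θ' x (q + 1) j)
            + (θ' (q + 2)).2 i0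
          = (∑ k ∈ Finset.range (m q), (θ (q + 1)).1 i0 k * feat σ m L θ x q k)
            + (θ (q + 1)).2 i0 := by
        have e1 : ∀ j ∈ Finset.range mh,
            (θ' (q + 2)).1 i0 j * feat σ m' (L + 1) θ' x (q + 1) j
            = (∑ k ∈ Finset.range (m q),
                ((θ' (q + 2)).1 i0 j * (lam j * (θ' (q + 1)).1 j k))
                  * feat σ m L θ x q k)
              + (θ' (q + 2)).1 i0 j * (lam j * (θ' (q + 1)).2 j + mu j) := by
          intro j hj
          rw [hσ' j (Finset.mem_range.mp hj)]
          rw [show (θ' (q + 2)).1 i0 j *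
              (lam j * ((∑ k ∈ Finset.range (m q),
                  (θ' (q + 1)).1 j k * feat σ m L θ x q k) + (θ' (q + 1)).2 j) + mu j)
            = ((θ' (q + 2)).1 i0 j * lam j) *
                (∑ k ∈ Finset.range (m q), (θ' (q + 1)).1 j k * feat σ m L θ x q k)
              + (θ' (q + 2)).1 i0 j * (lam j * (θ' (q + 1)).2 j + mu j) by ring]
          rw [Finset.mul_sum]
          congr 1
          exact Finset.sum_congr rfl fun k _ => by ring
        rw [Finset.sum_congr rfl e1, Finset.sum_add_distrib, Finset.sum_comm]
        have e2 : ∀ k ∈ Finset.range (m q),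
            (∑ j ∈ Finset.range mh,
              ((θ' (q + 2)).1 i0 j * (lam j * (θ' (q + 1)).1 j k))
                * feat σ m L θ x q k)
            = (θ (q + 1)).1 i0 k * feat σ m L θ x q k := by
          intro k hk
          rw [← Finset.sum_mul, hOut.1 i0 hi k (Finset.mem_range.mp hk)]
        rw [Finset.sum_congr rfl e2, add_assoc]
        congr 1
        exact hOut.2 i0 hi
      rw [hsum]
      by_cases hLl : q + 1 = L
      · have h2 : q + 2 = L + 1 := by omega
        simp [hLl, h2]
      · have h2 : q + 2 ≠ L + 1 := by omega
        simp [hLl, h2]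
    · simp [hi]
  -- Claim 3: propagate upward
  have hC : ∀ l, q + 1 ≤ l → l ≤ L →
      feat σ m' (L + 1) θ' x (l + 1) = feat σ m L θ x l := by
    intro l hl1
    induction l, hl1 using Nat.le_induction with
    | base => intro _; exact hB
    | succ l hl ih =>
      intro hlL
      have ihl := ih (by omega)
      funext i0
      have hw : m' (l + 1 + 1) = m (l + 1) := by
        have := hw2 (l + 2) (by omega); simpa using this
      have hwprev : m' (l + 1) = m l := by
        have := hw2 (l + 1) (by omega); simpa using this
      have hloc := hLoc.2 (l + 2) (by omega) (by omega)
      simp only [show l + 2 - 1 = l + 1 by omega, show l + 2 - 2 = l by omega] at hloc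
      rw [featEq m' (L + 1) θ', featEq m L θ, hw, hwprev]
      by_cases hi : i0 < m (l + 1)
      · simp only [hi, if_true]
        have hsum : (∑ j ∈ Finset.range (m l),
              (θ' (l + 1 + 1)).1 i0 j * feat σ m' (L + 1) θ' x (l + 1) j)
            = ∑ j ∈ Finset.range (m l), (θ (l + 1)).1 i0 j * feat σ m L θ x l j := by
          refine Finset.sum_congr rfl fun j hj => ?_
          rw [ihl, hloc.1 i0 hi j (Finset.mem_range.mp hj)]
        rw [hsum, hloc.2 i0 hi]
        by_cases hLl : l + 1 = L
        · have h2 : l + 1 + 1 = L + 1 := by omega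
          simp [hLl, h2]
        · have h2 : l + 1 + 1 ≠ L + 1 := by omega
          simp [hLl, h2]
      · simp [hi]
  have hfinal := hC L (by omega) le_rfl
  show feat σ m' (L + 1) θ' x (L + 1) = feat σ m L θ x L
  exact hfinal
end

section
/- Empirical risk preservation under one-layer lifting: Given data S, a fully-connected NN, a one-layer deeper NN′, and a parameter θ of NN, every lifted parameter θ′ ∈ T_S(θ) satisfies R_S(θ′) = R_S(θ), where R_S is the empirical risk. -/
/-- One-step unfolding of `feat` at a positive layer. -/
lemma feat_succ (σ : ℝ → ℝ) (m : ℕ → ℕ) (L : ℕ) (θ : NNParams) (x : ℕ → ℝ) (l i : ℕ) :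
    feat σ m L θ x (l + 1) i
      = if i < m (l + 1) then
          (if l + 1 = L then id else σ)
            ((∑ j ∈ Finset.range (m l), (θ (l + 1)).1 i j * feat σ m L θ x l j)
              + (θ (l + 1)).2 i)
        else 0 := by
  rw [feat]

/-- **Empirical risk preservation under one-layer lifting.**  Every lifted parameter
`θ' ∈ T_S(θ)` satisfies `R_S(θ') = R_S(θ)`. -/
theorem risk_preservation_one_layer_lifting
    (σ : ℝ → ℝ) (ℓ : (ℕ → ℝ) → (ℕ → ℝ) → ℝ) (m : ℕ → ℕ) (L q mh : ℕ)
    (hq : 1 ≤ q) (hqL : q + 1 ≤ L)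
    (hmh : min (m q) (m (q + 1)) ≤ mh)
    {n : ℕ} (S : Fin n → (ℕ → ℝ) × (ℕ → ℝ)) (θ θ' : NNParams)
    (hθ' : θ' ∈ liftSet σ m L q mh S θ) :
    empRisk σ ℓ (insertWidth m q mh) (L + 1) S θ' = empRisk σ ℓ m L S θ := by
  obtain ⟨lam, mu, aa, bb, hlocal, hlin, hout⟩ := hθ'
  set m' := insertWidth m q mh with hm'
  have hw_le : ∀ l ≤ q, m' l = m l := by
    intro l hl; simp [hm', insertWidth, hl]
  have hw_mid : m' (q + 1) = mh := by
    simp [hm', insertWidth]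
  have hw_hi : ∀ l, q + 2 ≤ l → m' l = m (l - 1) := by
    intro l hl
    have h1 : ¬ l ≤ q := by omega
    have h2 : l ≠ q + 1 := by omega
    simp [hm', insertWidth, h1, h2]
  have key : ∀ p : Fin n, nnOut σ m' (L + 1) θ' (S p).1 = nnOut σ m L θ (S p).1 := by
    intro p
    set x := (S p).1 with hx
    have hfeat_le : ∀ l ≤ q, feat σ m' (L + 1) θ' x l = feat σ m L θ x l := by
      intro l hl
      induction l with
      | zero =>
        funext j
        simp [feat, hw_le 0 (Nat.zero_le q)]
      | succ l ih =>
        have ihl := ih (by omega)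
        funext j
        have hml : m' (l + 1) = m (l + 1) := hw_le _ hl
        have hml' : m' l = m l := hw_le _ (by omega)
        have hne1 : l + 1 ≠ L + 1 := by omega
        have hne2 : l + 1 ≠ L := by omega
        have hpar := hlocal.1 (l + 1) (by omega) hl
        rw [feat_succ, feat_succ, hml, hml', ihl, if_neg hne1, if_neg hne2]
        by_cases hj : j < m (l + 1)
        · rw [if_pos hj, if_pos hj]
          congr 2
          · apply Finset.sum_congr rfl
            intro k hk
            rw [Finset.mem_range] at hk
            rw [hpar.1 j hj k hk]
          · exact hpar.2 j hj
        · rw [if_neg hj, if_neg hj]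
    have hfeat_hi : ∀ l, q + 1 ≤ l → l ≤ L →
        feat σ m' (L + 1) θ' x (l + 1) = feat σ m L θ x l := by
      intro l hl1 hl2
      induction l with
      | zero => omega
      | succ l ih =>
        rcases Nat.lt_or_ge l (q + 1) with hcase | hcase
        · -- base case: l = q
          have hlq : q = l := by omega
          subst hlq
          funext i
          have hm2 : m' (q + 1 + 1) = m (q + 1) := by
            have := hw_hi (q + 2) le_rfl; simpa using this
          have hmq : m' q = m q := hw_le q le_rfl
          have hfq : feat σ m' (L + 1) θ' x q = feat σ m L θ x q := hfeat_le q le_rfl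
          rw [feat_succ, feat_succ, hm2, hw_mid]
          by_cases hi : i < m (q + 1)
          · rw [if_pos hi, if_pos hi]
            have hpre : (∑ j ∈ Finset.range mh,
                  (θ' (q + 1 + 1)).1 i j * feat σ m' (L + 1) θ' x (q + 1) j)
                  + (θ' (q + 1 + 1)).2 i
                = (∑ k ∈ Finset.range (m q),
                    (θ (q + 1)).1 i k * feat σ m L θ x q k) + (θ (q + 1)).2 i := by
              have hinner : ∀ j ∈ Finset.range mh,
                  (θ' (q + 1 + 1)).1 i j * feat σ m' (L + 1) θ' x (q + 1) j
                  = (∑ k ∈ Finset.range (m q),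
                      ((θ' (q + 2)).1 i j * (lam j * (θ' (q + 1)).1 j k)) * feat σ m L θ x q k)
                    + (θ' (q + 2)).1 i j * (lam j * (θ' (q + 1)).2 j + mu j) := by
                intro j hj
                rw [Finset.mem_range] at hj
                obtain ⟨⟨hab, hlam, haff⟩, hmem⟩ := hlin j hj
                have hfj : feat σ m' (L + 1) θ' x (q + 1) j
                    = lam j * (preAct σ m' (L + 1) θ' x (q + 1) j) + mu j := by
                  have hne : q + 1 ≠ L + 1 := by omega
                  rw [feat_succ, hw_mid, if_pos hj, if_neg hne]
                  have hpe : (∑ k ∈ Finset.range (m' q),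
                        (θ' (q + 1)).1 j k * feat σ m' (L + 1) θ' x q k)
                      + (θ' (q + 1)).2 j = preAct σ m' (L + 1) θ' x (q + 1) j := by
                    simp [preAct]
                  rw [hpe]
                  exact haff _ (hmem p)
                have hpa : preAct σ m' (L + 1) θ' x (q + 1) j
                    = (∑ k ∈ Finset.range (m q),
                        (θ' (q + 1)).1 j k * feat σ m L θ x q k) + (θ' (q + 1)).2 j := by
                  simp [preAct, hmq, hfq]
                rw [hfj, hpa, show q + 1 + 1 = q + 2 from rfl]
                have hs : (∑ k ∈ Finset.range (m q),
                      ((θ' (q + 2)).1 i j * (lam j * (θ' (q + 1)).1 j k)) * feat σ m L θ x q k)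
                    = (θ' (q + 2)).1 i j *
                        (lam j * ∑ k ∈ Finset.range (m q),
                          (θ' (q + 1)).1 j k * feat σ m L θ x q k) := by
                  rw [Finset.mul_sum, Finset.mul_sum]
                  exact Finset.sum_congr rfl fun k _ => by ring
                rw [hs]
                ring
              rw [Finset.sum_congr rfl hinner, Finset.sum_add_distrib]
              rw [Finset.sum_comm]
              have h1 : ∀ k ∈ Finset.range (m q),
                  (∑ j ∈ Finset.range mh,
                    ((θ' (q + 2)).1 i j * (lam j * (θ' (q + 1)).1 j k)) * feat σ m L θ x q k)
                  = (θ (q + 1)).1 i k * feat σ m L θ x q k := by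
                intro k hk
                rw [Finset.mem_range] at hk
                rw [← Finset.sum_mul, hout.1 i hi k hk]
              rw [Finset.sum_congr rfl h1, add_assoc, hout.2 i hi]
            rw [hpre]
            by_cases hQL : q + 1 = L
            · rw [if_pos (by omega : q + 1 + 1 = L + 1), if_pos hQL]
            · rw [if_neg (by omega : ¬ q + 1 + 1 = L + 1), if_neg hQL]
          · rw [if_neg hi, if_neg hi]
        · -- step case
          have ihl := ih hcase (by omega)
          funext i
          have hm2 : m' (l + 1 + 1) = m (l + 1) := by
            have := hw_hi (l + 2) (by omega); simpa using this
          have hm1 : m' (l + 1) = m l := by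
            have := hw_hi (l + 1) (by omega); simpa using this
          have hpar := hlocal.2 (l + 2) (by omega) (by omega)
          rw [feat_succ, feat_succ, hm2, hm1, ihl]
          by_cases hi : i < m (l + 1)
          · have hpar1 : ∀ j' < m l, (θ' (l + 2)).1 i j' = (θ (l + 1)).1 i j' := by
              intro j' hj'
              have := hpar.1 i (by simpa using hi) j' (by simpa using hj')
              simpa using this
            have hpar2 : (θ' (l + 2)).2 i = (θ (l + 1)).2 i := by
              have := hpar.2 i (by simpa using hi)
              simpa using this
            rw [if_pos hi, if_pos hi]
            have hsum : (∑ j ∈ Finset.range (m l),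
                  (θ' (l + 1 + 1)).1 i j * feat σ m L θ x l j) + (θ' (l + 1 + 1)).2 i
                = (∑ j ∈ Finset.range (m l),
                    (θ (l + 1)).1 i j * feat σ m L θ x l j) + (θ (l + 1)).2 i := by
              have hterm : ∀ k ∈ Finset.range (m l),
                  (θ' (l + 1 + 1)).1 i k * feat σ m L θ x l k
                    = (θ (l + 1)).1 i k * feat σ m L θ x l k := by
                intro k hk
                rw [Finset.mem_range] at hk
                rw [show l + 1 + 1 = l + 2 from rfl, hpar1 k hk]
              rw [Finset.sum_congr rfl hterm, show l + 1 + 1 = l + 2 from rfl, hpar2]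
            rw [hsum]
            by_cases hQL : l + 1 = L
            · rw [if_pos (by omega : l + 1 + 1 = L + 1), if_pos hQL]
            · rw [if_neg (by omega : ¬ l + 1 + 1 = L + 1), if_neg hQL]
          · rw [if_neg hi, if_neg hi]
    have hfin := hfeat_hi L (by omega) le_rfl
    simp only [nnOut, hfin]
  unfold empRisk
  congr 1
  apply Finset.sum_congr rfl
  intro p _
  rw [key p]
end

section
/- Explicit construction of a lifted parameter (narrow output case): Let NN have widths {m_l}_{l=0}^L, let q ∈ [L−1], and suppose m_{q+1} ≤ m_q. Let NN′ be one-layer deeper than NN at position q with inserted width m′_{q̂} = m_{q+1}. Let (a,b) be an affine subdomain of σ with constants λ ≠ 0, μ, and fix x_low < x_up with [x_low, x_up] ⊂ (a,b). Given a parameter θ of NN, set x_min = min_{i∈[n], j∈[m_{q+1}]} (W^[q+1] f^[q]_θ(x_i) + b^[q+1])_j and x_max the corresponding maximum, and assume x_min ≠ x_max. Define ξ = (x_up − x_low)/(x_max − x_min), W′^[q̂] = ξ W^[q+1], b′^[q̂] = ξ b^[q+1] + (x_low − ξ x_min)1, W′^[q+1] = (1/(λξ)) I, and b′^[q+1] =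 b^[q+1] − W′^[q+1](λ b′^[q̂] + μ 1), and let θ′ be the parameter of NN′ obtained from θ by inserting (W′^[q̂], b′^[q̂]) at layer q̂ and replacing layer q+1 by (W′^[q+1], b′^[q+1]). Then θ′ ∈ T_S(θ), i.e., θ′ satisfies the local-in-layer, layer linearization, and output preserving conditions. -/
/-!
The inserted layer rescales the pre-activations of layer `q+1` by `ξ > 0` and shifts them, so that
their range `[x_min, x_max]` over the data is mapped onto `[x_low, x_up] ⊂ (a, b)`. There `σ`
acts as `t ↦ λ t + μ`, so the new layer `q+1`, namely `(λ ξ)⁻¹ I` with the compensating bias,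
undoes both the rescaling and `σ` and reproduces `W^[q+1] f^[q] + b^[q+1]`.
-/

/-- Inserting the layers `hidden` (deep index `q+1`) and `next` (deep index `q+2`) into `θ`
after its layer `q`; the shallow layer `q+1` is dropped. -/
def insertLayer (θ : NNParams) (q : ℕ) (hidden next : (ℕ → ℕ → ℝ) × (ℕ → ℝ)) : NNParams :=
  fun l => if l = q + 1 then hidden else if l = q + 2 then next else if l ≤ q then θ l
    else θ (l - 1)

section insertLayer

variable (θ : NNParams) (q : ℕ) (hidden next : (ℕ → ℕ → ℝ) × (ℕ → ℝ))

lemma insertLayer_of_le {l : ℕ} (hl : l ≤ q) : insertLayer θ q hidden next l = θ l := by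
  simp only [insertLayer, if_neg (show l ≠ q + 1 by omega), if_neg (show l ≠ q + 2 by omega),
    if_pos hl]

lemma insertLayer_of_ge {l : ℕ} (hl : q + 3 ≤ l) :
    insertLayer θ q hidden next l = θ (l - 1) := by
  simp only [insertLayer, if_neg (show l ≠ q + 1 by omega), if_neg (show l ≠ q + 2 by omega),
    if_neg (show ¬l ≤ q by omega)]

lemma insertLayer_hidden : insertLayer θ q hidden next (q + 1) = hidden := if_pos rfl

lemma insertLayer_next : insertLayer θ q hidden next (q + 2) = next := by
  simp [insertLayer]

lemma localInLayer_insertLayer (m : ℕ → ℕ) (L : ℕ) :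
    LocalInLayer m L q θ (insertLayer θ q hidden next) := by
  refine ⟨fun l _ hl => ?_, fun l hl _ => ?_⟩
  · simp [insertLayer_of_le θ q hidden next hl]
  · simp [insertLayer_of_ge θ q hidden next hl]

lemma feat_insertLayer_of_le (σ : ℝ → ℝ) (m : ℕ → ℕ) (L mh : ℕ) (hqL : q < L) (x : ℕ → ℝ) :
    ∀ l ≤ q, feat σ (insertWidth m q mh) (L + 1) (insertLayer θ q hidden next) x l =
      feat σ m L θ x l
  | 0, _ => by funext i; simp [feat, insertWidth]
  | k + 1, hk => by
    funext i
    have hwk : insertWidth m q mh k = m k := if_pos (by omega)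
    have hwk1 : insertWidth m q mh (k + 1) = m (k + 1) := if_pos hk
    simp only [feat, hwk, hwk1, feat_insertLayer_of_le σ m L mh hqL x k (by omega),
      insertLayer_of_le θ q hidden next hk, if_neg (show k + 1 ≠ L + 1 by omega),
      if_neg (show k + 1 ≠ L by omega)]

lemma preAct_insertLayer_rescale (σ : ℝ → ℝ) (m : ℕ → ℕ) (L mh : ℕ) (hqL : q < L)
    (ξ c : ℝ) (x : ℕ → ℝ) (j : ℕ) :
    preAct σ (insertWidth m q mh) (L + 1)
      (insertLayer θ q ((fun i k => ξ * (θ (q + 1)).1 i k), (fun i => ξ * (θ (q + 1)).2 i + c))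
        next) x (q + 1) j =
      ξ * preAct σ m L θ x (q + 1) j + c := by
  have hwq : insertWidth m q mh q = m q := if_pos le_rfl
  simp only [preAct, Nat.add_sub_cancel, hwq, insertLayer_hidden,
    feat_insertLayer_of_le θ q _ next σ m L mh hqL x q le_rfl, Finset.mul_sum, mul_add,
    mul_assoc]
  ring

end insertLayer

lemma sum_range_diagonal_mul {N i : ℕ} (hi : i < N) (c : ℝ) (g : ℕ → ℝ) :
    ∑ j ∈ Finset.range N, (if i = j then c else 0) * g j = c * g i := by
  simp [ite_mul, Finset.mem_range.2 hi]

lemma outputPres_insertLayer_rescale (m : ℕ → ℕ) (θ : NNParams) (q : ℕ)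
    {lam ξ : ℝ} (hlam : lam ≠ 0) (hξ : ξ ≠ 0) (c mu : ℝ) :
    OutputPres m q (m (q + 1)) θ
      (insertLayer θ q
        ((fun i j => ξ * (θ (q + 1)).1 i j), (fun i => ξ * (θ (q + 1)).2 i + c))
        ((fun i j => if i = j then 1 / (lam * ξ) else 0),
         (fun i => (θ (q + 1)).2 i - 1 / (lam * ξ) * (lam * (ξ * (θ (q + 1)).2 i + c) + mu))))
      (fun _ => lam) (fun _ => mu) := by
  simp only [OutputPres, insertLayer_hidden, insertLayer_next]
  refine ⟨fun i hi k _ => ?_, fun i hi => ?_⟩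
  · rw [sum_range_diagonal_mul hi]
    field_simp
  · rw [sum_range_diagonal_mul hi]
    ring

lemma rescale_mem_Icc {xmin xmax xlow xup v : ℝ} (hminmax : xmin < xmax) (hlu : xlow ≤ xup)
    (hv : v ∈ Set.Icc xmin xmax) :
    (xup - xlow) / (xmax - xmin) * v + (xlow - (xup - xlow) / (xmax - xmin) * xmin) ∈
      Set.Icc xlow xup := by
  have hd : 0 < xmax - xmin := sub_pos.2 hminmax
  have hξ : 0 ≤ (xup - xlow) / (xmax - xmin) := div_nonneg (sub_nonneg.2 hlu) hd.le
  have hξd : (xup - xlow) / (xmax - xmin) * (xmax - xmin) = xup - xlow :=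
    div_mul_cancel₀ _ hd.ne'
  constructor <;> nlinarith [hv.1, hv.2]

lemma insertLayer_mem_liftSet (σ : ℝ → ℝ) (m : ℕ → ℕ) (L q mh : ℕ) {n : ℕ}
    (S : Fin n → (ℕ → ℝ) × (ℕ → ℝ)) (θ : NNParams) (hidden next : (ℕ → ℕ → ℝ) × (ℕ → ℝ))
    {a b lam mu : ℝ} (hσ : AffineSubdomain σ a b lam mu)
    (hlin : ∀ i : Fin n, ∀ j < mh, preAct σ (insertWidth m q mh) (L + 1)
      (insertLayer θ q hidden next) (S i).1 (q + 1) j ∈ Set.Ioo a b)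
    (hout : OutputPres m q mh θ (insertLayer θ q hidden next) (fun _ => lam) (fun _ => mu)) :
    insertLayer θ q hidden next ∈ liftSet σ m L q mh S θ :=
  ⟨fun _ => lam, fun _ => mu, fun _ => a, fun _ => b, localInLayer_insertLayer θ q hidden next m L,
    fun j hj => ⟨hσ, fun i => hlin i j hj⟩, hout⟩

theorem explicit_lifting_narrow_output_general
    (σ : ℝ → ℝ) (m : ℕ → ℕ) (L q : ℕ)
    (hqL : q + 1 ≤ L)
    (a b lam mu : ℝ) (hσ : AffineSubdomain σ a b lam mu)
    (xlow xup : ℝ) (hal : a < xlow) (hlu : xlow < xup) (hub : xup < b)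
    {n : ℕ} (S : Fin n → (ℕ → ℝ) × (ℕ → ℝ)) (θ : NNParams)
    (xmin xmax : ℝ)
    (hmin : IsLeast
      {v : ℝ | ∃ i : Fin n, ∃ j < m (q + 1), v = preAct σ m L θ (S i).1 (q + 1) j} xmin)
    (hmax : IsGreatest
      {v : ℝ | ∃ i : Fin n, ∃ j < m (q + 1), v = preAct σ m L θ (S i).1 (q + 1) j} xmax)
    (hne : xmin ≠ xmax) :
    (fun l =>
      if l = q + 1 then
        ((fun i j => (xup - xlow) / (xmax - xmin) * (θ (q + 1)).1 i j),
         (fun i => (xup - xlow) / (xmax - xmin) * (θ (q + 1)).2 i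
            + (xlow - (xup - xlow) / (xmax - xmin) * xmin)))
      else if l = q + 2 then
        ((fun i j => if i = j then 1 / (lam * ((xup - xlow) / (xmax - xmin))) else 0),
         (fun i => (θ (q + 1)).2 i
            - 1 / (lam * ((xup - xlow) / (xmax - xmin)))
              * (lam * ((xup - xlow) / (xmax - xmin) * (θ (q + 1)).2 i
                    + (xlow - (xup - xlow) / (xmax - xmin) * xmin)) + mu)))
      else if l ≤ q then θ l
      else θ (l - 1) : NNParams)
      ∈ liftSet σ m L q (m (q + 1)) S θ := by
  have hminmax : xmin < xmax := lt_of_le_of_ne (hmax.2 hmin.1) hne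
  have hξ : (xup - xlow) / (xmax - xmin) ≠ 0 := div_ne_zero (by linarith) (by linarith)
  refine insertLayer_mem_liftSet σ m L q _ S θ _ _ hσ (fun i j hj => ?_)
    (outputPres_insertLayer_rescale m θ q hσ.2.1 hξ _ mu)
  have hv : preAct σ m L θ (S i).1 (q + 1) j ∈ Set.Icc xmin xmax :=
    ⟨hmin.2 ⟨i, j, hj, rfl⟩, hmax.2 ⟨i, j, hj, rfl⟩⟩
  have hrescaled := rescale_mem_Icc hminmax hlu.le hv
  rw [preAct_insertLayer_rescale θ q _ σ m L _ hqL]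
  exact ⟨hal.trans_le hrescaled.1, hrescaled.2.trans_lt hub⟩

/-- **Explicit construction of a lifted parameter (narrow output case,
`m (q+1) ≤ m q`, inserted width `mh = m (q+1)`).**  With
`ξ = (x_up - x_low)/(x_max - x_min)`, `W'^[q̂] = ξ W^[q+1]`,
`b'^[q̂] = ξ b^[q+1] + (x_low - ξ x_min) 1`, `W'^[q+1] = (1/(λξ)) I` and
`b'^[q+1] = b^[q+1] - W'^[q+1] (λ b'^[q̂] + μ 1)`, the resulting parameter lies in
`T_S(θ)`. -/
theorem explicit_lifting_narrow_output
    (σ : ℝ → ℝ) (m : ℕ → ℕ) (L q : ℕ)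
    (hq : 1 ≤ q) (hqL : q + 1 ≤ L)
    (hw : m (q + 1) ≤ m q)
    (a b lam mu : ℝ) (hσ : AffineSubdomain σ a b lam mu)
    (xlow xup : ℝ) (hal : a < xlow) (hlu : xlow < xup) (hub : xup < b)
    {n : ℕ} (S : Fin n → (ℕ → ℝ) × (ℕ → ℝ)) (θ : NNParams)
    (xmin xmax : ℝ)
    (hmin : IsLeast
      {v : ℝ | ∃ i : Fin n, ∃ j < m (q + 1), v = preAct σ m L θ (S i).1 (q + 1) j} xmin)
    (hmax : IsGreatest
      {v : ℝ | ∃ i : Fin n, ∃ j < m (q + 1), v = preAct σ m L θ (S i).1 (q + 1) j} xmax)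
    (hne : xmin ≠ xmax) :
    (fun l =>
      if l = q + 1 then
        ((fun i j => (xup - xlow) / (xmax - xmin) * (θ (q + 1)).1 i j),
         (fun i => (xup - xlow) / (xmax - xmin) * (θ (q + 1)).2 i
            + (xlow - (xup - xlow) / (xmax - xmin) * xmin)))
      else if l = q + 2 then
        ((fun i j => if i = j then 1 / (lam * ((xup - xlow) / (xmax - xmin))) else 0),
         (fun i => (θ (q + 1)).2 i
            - 1 / (lam * ((xup - xlow) / (xmax - xmin)))
              * (lam * ((xup - xlow) / (xmax - xmin) * (θ (q + 1)).2 i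
                    + (xlow - (xup - xlow) / (xmax - xmin) * xmin)) + mu)))
      else if l ≤ q then θ l
      else θ (l - 1) : NNParams)
      ∈ liftSet σ m L q (m (q + 1)) S θ :=
  explicit_lifting_narrow_output_general σ m L q hqL a b lam mu hσ xlow xup hal hlu hub S θ xmin
    xmax hmin hmax hne
end
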